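/- If l₁ ≤ d, l₁ ≤ n − 2d, l₂ > n − d, l₂ ≥ 2d, and l₁ + l₂ ≤ n, then from every admissible initial state the two-contour system reaches a unique limit cycle on which cluster 1 has average velocity v₁ = 1/2 and cluster 2 has average velocity v₂ = 1. -/
import Mathlib


open scoped Classical

namespace TwoContour

/-- A state of the two-contour system: the cells of the front particles
of cluster 1 and cluster 2. -/
abbrev State (n : ℕ) := ZMod n × ZMod n

/-- Cell `c` is occupied by a cluster of length `l` whose front particle is at cell `α`:
the cluster occupies cells `α, α-1, …, α-(l-1)` (mod `n`). -/
def occ (n : ℕ) (α : ZMod n) (l : ℕ) (c : ZMod n) : Prop :=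
  ∃ k : ℕ, k < l ∧ c = α - (k : ZMod n)

/-- Cluster 1 is delayed: its front stands at node 1 (cell 0 of contour 1) while
cluster 2 occupies node 1 (cells `d`, `d+1` of contour 2) or stands at node 1
(competition at node 1 is resolved in favor of cluster 2); or its front stands at
node 2 (cell `d` of contour 1) while cluster 2 occupies node 2 (cells 0, 1 of contour 2). -/
def blocked1 (n l1 l2 d : ℕ) (s : State n) : Prop :=
  (s.1 = 0 ∧ ((occ n s.2 l2 (d : ZMod n) ∧ occ n s.2 l2 ((d : ZMod n) + 1)) ∨ s.2 = (d : ZMod n)))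
  ∨ (s.1 = (d : ZMod n) ∧ occ n s.2 l2 0 ∧ occ n s.2 l2 1)

/-- Cluster 2 is delayed: its front stands at node 2 (cell 0 of contour 2) while
cluster 1 occupies node 2 (cells `d`, `d+1` of contour 1) or stands at node 2
(competition at node 2 is resolved in favor of cluster 1); or its front stands at
node 1 (cell `d` of contour 2) while cluster 1 occupies node 1 (cells 0, 1 of contour 1). -/
def blocked2 (n l1 l2 d : ℕ) (s : State n) : Prop :=
  (s.2 = 0 ∧ ((occ n s.1 l1 (d : ZMod n) ∧ occ n s.1 l1 ((d : ZMod n) + 1)) ∨ s.1 = (d : ZMod n)))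
  ∨ (s.2 = (d : ZMod n) ∧ occ n s.1 l1 0 ∧ occ n s.1 l1 1)

/-- One time step of the deterministic dynamics: each non-delayed cluster advances one cell. -/
noncomputable def step (n l1 l2 d : ℕ) (s : State n) : State n :=
  (if blocked1 n l1 l2 d s then s.1 else s.1 + 1,
   if blocked2 n l1 l2 d s then s.2 else s.2 + 1)

/-- A state of free motion: from this state on, neither cluster is ever delayed. -/
def FreeState (n l1 l2 d : ℕ) (s : State n) : Prop :=
  ∀ t : ℕ, ¬ blocked1 n l1 l2 d ((step n l1 l2 d)^[t] s) ∧
           ¬ blocked2 n l1 l2 d ((step n l1 l2 d)^[t] s)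

/-- A state of collapse: from this state on, no particle of either cluster ever moves. -/
def CollapseState (n l1 l2 d : ℕ) (s : State n) : Prop :=
  ∀ t : ℕ, blocked1 n l1 l2 d ((step n l1 l2 d)^[t] s) ∧
           blocked2 n l1 l2 d ((step n l1 l2 d)^[t] s)

/-- `s` lies on a limit cycle of period `T`. -/
def Periodic (n l1 l2 d : ℕ) (s : State n) (T : ℕ) : Prop :=
  0 < T ∧ (step n l1 l2 d)^[T] s = s

/-- Number of moves of cluster 1 during the first `T` steps starting from `s`. -/
noncomputable def moves1 (n l1 l2 d : ℕ) (s : State n) (T : ℕ) : ℕ :=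
  ((Finset.range T).filter (fun t => ¬ blocked1 n l1 l2 d ((step n l1 l2 d)^[t] s))).card

/-- Number of moves of cluster 2 during the first `T` steps starting from `s`. -/
noncomputable def moves2 (n l1 l2 d : ℕ) (s : State n) (T : ℕ) : ℕ :=
  ((Finset.range T).filter (fun t => ¬ blocked2 n l1 l2 d ((step n l1 l2 d)^[t] s))).card

/-- An admissible state: the two clusters do not occupy the same node simultaneously. -/
def Admissible (n l1 l2 d : ℕ) (s : State n) : Prop :=
  ¬ (occ n s.1 l1 0 ∧ occ n s.1 l1 1 ∧
     occ n s.2 l2 (d : ZMod n) ∧ occ n s.2 l2 ((d : ZMod n) + 1)) ∧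
  ¬ (occ n s.1 l1 (d : ZMod n) ∧ occ n s.1 l1 ((d : ZMod n) + 1) ∧
     occ n s.2 l2 0 ∧ occ n s.2 l2 1)


/-! ### Auxiliary nat-level development -/

/-- Context of hypotheses used throughout. -/
def Ctx (n l1 l2 d : ℕ) : Prop :=
  2 * d ≤ l2 ∧ n - l2 < d ∧ l1 + l2 ≤ n ∧ 0 < l1 ∧ l2 < n

lemma modfacts (n x : ℕ) (hn : 0 < n) (h : x < 2 * n) :
    (x % n = x ∨ x % n = x - n) ∧ x % n < n := by
  refine ⟨?_, Nat.mod_lt _ hn⟩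
  rcases lt_or_ge x n with h' | h'
  · exact Or.inl (Nat.mod_eq_of_lt h')
  · right
    rw [Nat.mod_eq_sub_mod h', Nat.mod_eq_of_lt (by omega)]

lemma cast_inj (n x y : ℕ) (hx : x < n) (hy : y < n) :
    ((x : ZMod n) = (y : ZMod n)) ↔ x = y := by
  rw [ZMod.natCast_eq_natCast_iff]
  unfold Nat.ModEq
  rw [Nat.mod_eq_of_lt hx, Nat.mod_eq_of_lt hy]

lemma occ_iff (n A C l : ℕ) (hn : 0 < n) (hA : A < n) (hC : C < n) (hl : l ≤ n) :
    occ n (A : ZMod n) l (C : ZMod n) ↔ (A + n - C) % n < l := by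
  unfold occ
  constructor
  · rintro ⟨k, hk, he⟩
    have h1 : ((C + k : ℕ) : ZMod n) = ((A : ℕ) : ZMod n) := by
      push_cast
      rw [he]; ring
    have h2 : (C + k) % n = A % n := (ZMod.natCast_eq_natCast_iff _ _ _).mp h1
    have h3 : (C + k + (n - C)) % n = (A + (n - C)) % n := Nat.ModEq.add_right _ h2
    rw [show C + k + (n - C) = k + n by omega, Nat.add_mod_right] at h3
    rw [Nat.mod_eq_of_lt (by omega : k < n)] at h3
    rw [show A + (n - C) = A + n - C by omega] at h3
    omega
  · intro h
    refine ⟨(A + n - C) % n, h, ?_⟩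
    have h1 : (C + (A + n - C) % n) % n = (C + (A + n - C)) % n :=
      Nat.ModEq.add_left C (Nat.mod_modEq (A + n - C) n)
    rw [show C + (A + n - C) = A + n by omega, Nat.add_mod_right,
      Nat.mod_eq_of_lt hA] at h1
    have h2 : ((C + (A + n - C) % n : ℕ) : ZMod n) = ((A : ℕ) : ZMod n) := by
      rw [ZMod.natCast_eq_natCast_iff]
      unfold Nat.ModEq
      rw [h1, Nat.mod_eq_of_lt hA]
    push_cast at h2
    linear_combination h2


lemma occ_iff' (n A C l : ℕ) (hn : 0 < n) (hA : A < n) (hC : C < n) (hl : l ≤ n) :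
    occ n (A : ZMod n) l (C : ZMod n) ↔
      ((C ≤ A ∧ A - C < l) ∨ (A < C ∧ A + n - C < l)) := by
  rw [occ_iff n A C l hn hA hC hl]
  rcases le_or_gt C A with h | h
  · rw [show A + n - C = (A - C) + n by omega, Nat.add_mod_right,
      Nat.mod_eq_of_lt (by omega)]
    omega
  · rw [Nat.mod_eq_of_lt (by omega)]
    omega

/-- nat-level blocked1. -/
def nb1 (n l2 d : ℕ) (p : ℕ × ℕ) : Prop :=
  (p.1 = 0 ∧ ¬(d - (n - l2) ≤ p.2 ∧ p.2 < d)) ∨ (p.1 = d ∧ 1 ≤ p.2 ∧ p.2 < l2)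

/-- nat-level blocked2. -/
def nb2 (n l1 d : ℕ) (p : ℕ × ℕ) : Prop :=
  (p.2 = 0 ∧ d ≤ p.1 ∧ p.1 < d + l1) ∨ (p.2 = d ∧ 1 ≤ p.1 ∧ p.1 < l1)

/-- nat-level step (valid on states with both coordinates < n). -/
noncomputable def nstep (n l1 l2 d : ℕ) (p : ℕ × ℕ) : ℕ × ℕ :=
  (if nb1 n l2 d p then p.1 else if p.1 + 1 = n then 0 else p.1 + 1,
   if nb2 n l1 d p then p.2 else if p.2 + 1 = n then 0 else p.2 + 1)

set_option maxHeartbeats 4000000 in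
lemma blocked1_iff (n l1 l2 d : ℕ) (hc : Ctx n l1 l2 d) (a b : ℕ) (ha : a < n) (hb : b < n) :
    blocked1 n l1 l2 d ((a : ZMod n), (b : ZMod n)) ↔ nb1 n l2 d (a, b) := by
  obtain ⟨c1, c2, c3, c4, c5⟩ := hc
  have hn : 0 < n := by omega
  have hdn : d + 1 < n := by omega
  have e0 : ((a : ZMod n) = 0) ↔ a = 0 := by
    rw [show (0 : ZMod n) = ((0 : ℕ) : ZMod n) by norm_cast]
    exact cast_inj n a 0 ha hn
  have ed : ((b : ZMod n) = (d : ZMod n)) ↔ b = d := cast_inj n b d hb (by omega)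
  have hc1 : ((d : ZMod n) + 1) = ((d + 1 : ℕ) : ZMod n) := by push_cast; ring
  have h0 : (0 : ZMod n) = ((0 : ℕ) : ZMod n) := by norm_cast
  have h1 : (1 : ZMod n) = ((1 : ℕ) : ZMod n) := by norm_cast
  have ead : ((a : ZMod n) = (d : ZMod n)) ↔ a = d := cast_inj n a d ha (by omega)
  have o1 := occ_iff' n b d l2 hn hb (by omega) (by omega)
  have o2 : occ n (b : ZMod n) l2 ((d : ZMod n) + 1) ↔
      (d + 1 ≤ b ∧ b - (d + 1) < l2 ∨ b < d + 1 ∧ b + n - (d + 1) < l2) := by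
    rw [hc1]; exact occ_iff' n b (d + 1) l2 hn hb (by omega) (by omega)
  have o3 : occ n (b : ZMod n) l2 (0 : ZMod n) ↔
      (0 ≤ b ∧ b - 0 < l2 ∨ b < 0 ∧ b + n - 0 < l2) := by
    rw [h0]; exact occ_iff' n b 0 l2 hn hb (by omega) (by omega)
  have o4 : occ n (b : ZMod n) l2 (1 : ZMod n) ↔
      (1 ≤ b ∧ b - 1 < l2 ∨ b < 1 ∧ b + n - 1 < l2) := by
    rw [h1]; exact occ_iff' n b 1 l2 hn hb (by omega) (by omega)
  simp only [blocked1, nb1, e0, ed, ead, o1, o2, o3, o4]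
  omega

set_option maxHeartbeats 4000000 in
lemma blocked2_iff (n l1 l2 d : ℕ) (hc : Ctx n l1 l2 d) (a b : ℕ) (ha : a < n) (hb : b < n) :
    blocked2 n l1 l2 d ((a : ZMod n), (b : ZMod n)) ↔ nb2 n l1 d (a, b) := by
  obtain ⟨c1, c2, c3, c4, c5⟩ := hc
  have hn : 0 < n := by omega
  have e0 : ((b : ZMod n) = 0) ↔ b = 0 := by
    rw [show (0 : ZMod n) = ((0 : ℕ) : ZMod n) by norm_cast]
    exact cast_inj n b 0 hb hn
  have ed : ((b : ZMod n) = (d : ZMod n)) ↔ b = d := cast_inj n b d hb (by omega)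
  have hc1 : ((d : ZMod n) + 1) = ((d + 1 : ℕ) : ZMod n) := by push_cast; ring
  have h0 : (0 : ZMod n) = ((0 : ℕ) : ZMod n) := by norm_cast
  have h1 : (1 : ZMod n) = ((1 : ℕ) : ZMod n) := by norm_cast
  have ead : ((a : ZMod n) = (d : ZMod n)) ↔ a = d := cast_inj n a d ha (by omega)
  have o1 := occ_iff' n a d l1 hn ha (by omega) (by omega)
  have o2 : occ n (a : ZMod n) l1 ((d : ZMod n) + 1) ↔
      (d + 1 ≤ a ∧ a - (d + 1) < l1 ∨ a < d + 1 ∧ a + n - (d + 1) < l1) := by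
    rw [hc1]; exact occ_iff' n a (d + 1) l1 hn ha (by omega) (by omega)
  have o3 : occ n (a : ZMod n) l1 (0 : ZMod n) ↔
      (0 ≤ a ∧ a - 0 < l1 ∨ a < 0 ∧ a + n - 0 < l1) := by
    rw [h0]; exact occ_iff' n a 0 l1 hn ha (by omega) (by omega)
  have o4 : occ n (a : ZMod n) l1 (1 : ZMod n) ↔
      (1 ≤ a ∧ a - 1 < l1 ∨ a < 1 ∧ a + n - 1 < l1) := by
    rw [h1]; exact occ_iff' n a 1 l1 hn ha (by omega) (by omega)
  simp only [blocked2, nb2, e0, ed, ead, o1, o2, o3, o4]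
  omega


lemma succ_cast (n x : ℕ) : ((x : ZMod n) + 1) = (((if x + 1 = n then 0 else x + 1) : ℕ) : ZMod n) := by
  have h : ((x : ZMod n) + 1) = ((x + 1 : ℕ) : ZMod n) := by push_cast; ring
  rw [h]
  split_ifs with hh
  · rw [hh]
    simp [ZMod.natCast_self]
  · rfl

lemma step_sim (n l1 l2 d : ℕ) (hc : Ctx n l1 l2 d) (a b : ℕ) (ha : a < n) (hb : b < n) :
    step n l1 l2 d ((a : ZMod n), (b : ZMod n)) =
      (((nstep n l1 l2 d (a, b)).1 : ZMod n), ((nstep n l1 l2 d (a, b)).2 : ZMod n)) := by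
  unfold step nstep
  by_cases h1 : nb1 n l2 d (a, b) <;> by_cases h2 : nb2 n l1 d (a, b)
  · rw [if_pos ((blocked1_iff n l1 l2 d hc a b ha hb).mpr h1),
      if_pos ((blocked2_iff n l1 l2 d hc a b ha hb).mpr h2), if_pos h1, if_pos h2]
  · rw [if_pos ((blocked1_iff n l1 l2 d hc a b ha hb).mpr h1),
      if_neg ((blocked2_iff n l1 l2 d hc a b ha hb).not.mpr h2), if_pos h1, if_neg h2]
    exact Prod.ext rfl (succ_cast n b)
  · rw [if_neg ((blocked1_iff n l1 l2 d hc a b ha hb).not.mpr h1),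
      if_pos ((blocked2_iff n l1 l2 d hc a b ha hb).mpr h2), if_neg h1, if_pos h2]
    exact Prod.ext (succ_cast n a) rfl
  · rw [if_neg ((blocked1_iff n l1 l2 d hc a b ha hb).not.mpr h1),
      if_neg ((blocked2_iff n l1 l2 d hc a b ha hb).not.mpr h2), if_neg h1, if_neg h2]
    exact Prod.ext (succ_cast n a) (succ_cast n b)

lemma nstep_bounds (n l1 l2 d : ℕ) (hn : 0 < n) (p : ℕ × ℕ) (h1 : p.1 < n) (h2 : p.2 < n) :
    (nstep n l1 l2 d p).1 < n ∧ (nstep n l1 l2 d p).2 < n := by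
  unfold nstep
  constructor <;> dsimp only <;> split_ifs <;> omega

lemma iter_sim (n l1 l2 d : ℕ) (hc : Ctx n l1 l2 d) :
    ∀ (t : ℕ) (p : ℕ × ℕ), p.1 < n → p.2 < n →
      ((step n l1 l2 d)^[t] (((p.1 : ℕ) : ZMod n), ((p.2 : ℕ) : ZMod n)) =
        ((((nstep n l1 l2 d)^[t] p).1 : ZMod n), (((nstep n l1 l2 d)^[t] p).2 : ZMod n)) ∧
       ((nstep n l1 l2 d)^[t] p).1 < n ∧ ((nstep n l1 l2 d)^[t] p).2 < n) := by
  intro t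
  induction t with
  | zero => intro p h1 h2; exact ⟨rfl, h1, h2⟩
  | succ t ih =>
    intro p h1 h2
    obtain ⟨e, b1, b2⟩ := ih p h1 h2
    have hn : 0 < n := by obtain ⟨c1, c2, c3, c4, c5⟩ := hc; omega
    have hb := nstep_bounds n l1 l2 d hn ((nstep n l1 l2 d)^[t] p) b1 b2
    rw [Function.iterate_succ_apply', Function.iterate_succ_apply', e]
    have hs := step_sim n l1 l2 d hc ((nstep n l1 l2 d)^[t] p).1 ((nstep n l1 l2 d)^[t] p).2 b1 b2
    rw [Prod.mk.eta] at hs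
    exact ⟨hs, hb⟩



lemma nb1_mk (n l2 d a b : ℕ) : nb1 n l2 d (a, b) ↔
    ((a = 0 ∧ ¬(d - (n - l2) ≤ b ∧ b < d)) ∨ (a = d ∧ 1 ≤ b ∧ b < l2)) := Iff.rfl

lemma nb2_mk (n l1 d a b : ℕ) : nb2 n l1 d (a, b) ↔
    ((b = 0 ∧ d ≤ a ∧ a < d + l1) ∨ (b = d ∧ 1 ≤ a ∧ a < l1)) := Iff.rfl

lemma nstep_mk (n l1 l2 d a b : ℕ) : nstep n l1 l2 d (a, b) =
    (if nb1 n l2 d (a, b) then a else if a + 1 = n then 0 else a + 1,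
     if nb2 n l1 d (a, b) then b else if b + 1 = n then 0 else b + 1) := rfl

lemma iter_comp {α : Type*} (f : α → α) {x y z : α} {t1 t2 : ℕ}
    (h1 : f^[t1] x = y) (h2 : f^[t2] y = z) : f^[t2 + t1] x = z := by
  rw [Function.iterate_add_apply, h1, h2]

section Reach

variable {n l1 l2 d : ℕ}

lemma reach_E0 (hc : Ctx n l1 l2 d) : ∀ δ b, b < n →
    (b = d - (n - l2) ∨ ¬(d - (n - l2) ≤ b ∧ b < d)) →
    ((b ≤ d - (n - l2) ∧ d - (n - l2) - b = δ) ∨ (d - (n - l2) < b ∧ n + (d - (n - l2)) - b = δ)) →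
    ∃ t, (nstep n l1 l2 d)^[t] (0, b) = (0, d - (n - l2)) := by
  obtain ⟨c1, c2, c3, c4, c5⟩ := hc
  intro δ
  induction δ with
  | zero =>
    intro b hb hH hδ
    exact ⟨0, by simp [show b = d - (n - l2) by omega]⟩
  | succ δ ih =>
    intro b hb hH hδ
    have hne : b ≠ d - (n - l2) := by omega
    have h1 : nb1 n l2 d (0, b) := by rw [nb1_mk]; omega
    have h2 : ¬ nb2 n l1 d (0, b) := by rw [nb2_mk]; omega
    by_cases hw : b + 1 = n
    · have hst : nstep n l1 l2 d (0, b) = (0, 0) := by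
        rw [nstep_mk, if_pos h1, if_neg h2, if_pos hw]
      obtain ⟨t, ht⟩ := ih 0 (by omega) (by omega) (by omega)
      exact ⟨t + 1, by rw [Function.iterate_succ_apply, hst, ht]⟩
    · have hst : nstep n l1 l2 d (0, b) = (0, b + 1) := by
        rw [nstep_mk, if_pos h1, if_neg h2, if_neg hw]
      obtain ⟨t, ht⟩ := ih (b + 1) (by omega) (by omega) (by omega)
      exact ⟨t + 1, by rw [Function.iterate_succ_apply, hst, ht]⟩

lemma reach_Ed (hc : Ctx n l1 l2 d) : ∀ δ b, 1 ≤ b → b + δ = l2 →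
    ∃ t, (nstep n l1 l2 d)^[t] (d, b) = (d, l2) := by
  obtain ⟨c1, c2, c3, c4, c5⟩ := hc
  intro δ
  induction δ with
  | zero => intro b hb hδ; exact ⟨0, by simp [show b = l2 by omega]⟩
  | succ δ ih =>
    intro b hb hδ
    have h1 : nb1 n l2 d (d, b) := by rw [nb1_mk]; omega
    have h2 : ¬ nb2 n l1 d (d, b) := by rw [nb2_mk]; omega
    have hst : nstep n l1 l2 d (d, b) = (d, b + 1) := by
      rw [nstep_mk, if_pos h1, if_neg h2, if_neg (show ¬(b + 1 = n) by omega)]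
    obtain ⟨t, ht⟩ := ih (b + 1) (by omega) (by omega)
    exact ⟨t + 1, by rw [Function.iterate_succ_apply, hst, ht]⟩

lemma reach_P0 (hc : Ctx n l1 l2 d) : ∀ δ a, d ≤ a → a + δ = d + l1 →
    ∃ t, (nstep n l1 l2 d)^[t] (a, 0) = (d + l1, 0) := by
  obtain ⟨c1, c2, c3, c4, c5⟩ := hc
  intro δ
  induction δ with
  | zero => intro a ha hδ; exact ⟨0, by simp [show a = d + l1 by omega]⟩
  | succ δ ih =>
    intro a ha hδ
    have h1 : ¬ nb1 n l2 d (a, 0) := by rw [nb1_mk]; omega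
    have h2 : nb2 n l1 d (a, 0) := by rw [nb2_mk]; omega
    have hst : nstep n l1 l2 d (a, 0) = (a + 1, 0) := by
      rw [nstep_mk, if_neg h1, if_pos h2, if_neg (show ¬(a + 1 = n) by omega)]
    obtain ⟨t, ht⟩ := ih (a + 1) (by omega) (by omega)
    exact ⟨t + 1, by rw [Function.iterate_succ_apply, hst, ht]⟩

lemma reach_TLOW (hc : Ctx n l1 l2 d) : ∀ δ a b, b < n → 1 ≤ a → a + δ = d →
    ∃ t b', b' < n ∧ (nstep n l1 l2 d)^[t] (a, b) = (d, b') := by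
  obtain ⟨c1, c2, c3, c4, c5⟩ := hc
  intro δ
  induction δ with
  | zero => intro a b hb ha hδ; exact ⟨0, b, hb, by simp [show a = d by omega]⟩
  | succ δ ih =>
    intro a b hb ha hδ
    have h1 : ¬ nb1 n l2 d (a, b) := by rw [nb1_mk]; omega
    have hfst : (nstep n l1 l2 d (a, b)).1 = a + 1 := by
      show (if nb1 n l2 d (a, b) then a else if a + 1 = n then 0 else a + 1) = a + 1
      rw [if_neg h1, if_neg (show ¬(a + 1 = n) by omega)]
    have hbnd := nstep_bounds n l1 l2 d (by omega) (a, b) (show a < n by omega) hb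
    have hst : nstep n l1 l2 d (a, b) = (a + 1, (nstep n l1 l2 d (a, b)).2) :=
      Prod.ext hfst rfl
    obtain ⟨t, b', hb', ht⟩ := ih (a + 1) (nstep n l1 l2 d (a, b)).2 hbnd.2 (by omega) (by omega)
    exact ⟨t + 1, b', hb', by rw [Function.iterate_succ_apply, hst, ht]⟩

lemma reach_THIGH (hc : Ctx n l1 l2 d) : ∀ δ a b, a < n → b < n → d < a → a + δ = n →
    ∃ t b', b' < n ∧ (nstep n l1 l2 d)^[t] (a, b) = (0, b') := by
  obtain ⟨c1, c2, c3, c4, c5⟩ := hc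
  intro δ
  induction δ with
  | zero => intro a b ha hb hda hδ; omega
  | succ δ ih =>
    intro a b ha hb hda hδ
    have h1 : ¬ nb1 n l2 d (a, b) := by rw [nb1_mk]; omega
    have hbnd := nstep_bounds n l1 l2 d (by omega) (a, b) ha hb
    by_cases hw : a + 1 = n
    · have hst : nstep n l1 l2 d (a, b) = (0, (nstep n l1 l2 d (a, b)).2) := by
        refine Prod.ext ?_ rfl
        show (if nb1 n l2 d (a, b) then a else if a + 1 = n then 0 else a + 1) = 0
        rw [if_neg h1, if_pos hw]
      exact ⟨1, (nstep n l1 l2 d (a, b)).2, hbnd.2, by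
        simp only [Function.iterate_one]; exact hst⟩
    · have hst : nstep n l1 l2 d (a, b) = (a + 1, (nstep n l1 l2 d (a, b)).2) := by
        refine Prod.ext ?_ rfl
        show (if nb1 n l2 d (a, b) then a else if a + 1 = n then 0 else a + 1) = a + 1
        rw [if_neg h1, if_neg hw]
      obtain ⟨t, b', hb', ht⟩ := ih (a + 1) (nstep n l1 l2 d (a, b)).2 (by omega) hbnd.2
        (by omega) (by omega)
      exact ⟨t + 1, b', hb', by rw [Function.iterate_succ_apply, hst, ht]⟩

lemma run_RS (hc : Ctx n l1 l2 d) : ∀ j b0, l2 ≤ b0 → b0 + j < n →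
    (nstep n l1 l2 d)^[j] (d, b0) = (d + j, b0 + j) := by
  obtain ⟨c1, c2, c3, c4, c5⟩ := hc
  intro j
  induction j with
  | zero => intro b0 hb0 hj; simp
  | succ j ih =>
    intro b0 hb0 hj
    rw [Function.iterate_succ_apply', ih b0 hb0 (by omega)]
    have h1 : ¬ nb1 n l2 d (d + j, b0 + j) := by rw [nb1_mk]; omega
    have h2 : ¬ nb2 n l1 d (d + j, b0 + j) := by rw [nb2_mk]; omega
    rw [nstep_mk, if_neg h1, if_neg h2, if_neg (show ¬(d + j + 1 = n) by omega),
      if_neg (show ¬(b0 + j + 1 = n) by omega)]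
    exact congrArg₂ Prod.mk (by omega) (by omega)

lemma reach_wrap0 (hc : Ctx n l1 l2 d) (b0 : ℕ) (hl : l2 ≤ b0) (hb0 : b0 < n) :
    (nstep n l1 l2 d)^[n - b0] (d, b0) = (d + (n - b0), 0) := by
  have hrun := run_RS hc (n - 1 - b0) b0 hl (by obtain ⟨c1, c2, c3, c4, c5⟩ := hc; omega)
  obtain ⟨c1, c2, c3, c4, c5⟩ := hc
  rw [show n - b0 = (n - 1 - b0) + 1 by omega, Function.iterate_succ_apply', hrun]
  have h1 : ¬ nb1 n l2 d (d + (n - 1 - b0), b0 + (n - 1 - b0)) := by rw [nb1_mk]; omega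
  have h2 : ¬ nb2 n l1 d (d + (n - 1 - b0), b0 + (n - 1 - b0)) := by rw [nb2_mk]; omega
  rw [nstep_mk, if_neg h1, if_neg h2, if_neg (show ¬(d + (n - 1 - b0) + 1 = n) by omega),
    if_pos (show b0 + (n - 1 - b0) + 1 = n by omega)]
  exact congrArg₂ Prod.mk (by omega) (by omega)

lemma run0 (hc : Ctx n l1 l2 d) : ∀ i a0, d + l1 ≤ a0 → a0 ≤ d + (n - l2) → a0 + i < n →
    (nstep n l1 l2 d)^[i] (a0, 0) = (a0 + i, i) := by
  obtain ⟨c1, c2, c3, c4, c5⟩ := hc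
  intro i
  induction i with
  | zero => intro a0 h1 h2 h3; simp
  | succ i ih =>
    intro a0 h1 h2 h3
    rw [Function.iterate_succ_apply', ih a0 h1 h2 (by omega)]
    have hb1 : ¬ nb1 n l2 d (a0 + i, i) := by rw [nb1_mk]; omega
    have hb2 : ¬ nb2 n l1 d (a0 + i, i) := by rw [nb2_mk]; omega
    rw [nstep_mk, if_neg hb1, if_neg hb2, if_neg (show ¬(a0 + i + 1 = n) by omega),
      if_neg (show ¬(i + 1 = n) by omega)]
    exact congrArg₂ Prod.mk (by omega) (by omega)

lemma reach_R1gen (hc : Ctx n l1 l2 d) (a0 : ℕ) (h1 : d + l1 ≤ a0) (h2 : a0 ≤ d + (n - l2)) :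
    ∃ t, (nstep n l1 l2 d)^[t] (a0, 0) = (0, d - (n - l2)) := by
  have hrun := run0 hc (n - 1 - a0) a0 h1 h2 (by obtain ⟨c1, c2, c3, c4, c5⟩ := hc; omega)
  obtain ⟨c1, c2, c3, c4, c5⟩ := hc
  have hstep : (nstep n l1 l2 d)^[(n - 1 - a0) + 1] (a0, 0) = (0, n - a0) := by
    rw [Function.iterate_succ_apply', hrun]
    have hb1 : ¬ nb1 n l2 d (a0 + (n - 1 - a0), n - 1 - a0) := by rw [nb1_mk]; omega
    have hb2 : ¬ nb2 n l1 d (a0 + (n - 1 - a0), n - 1 - a0) := by rw [nb2_mk]; omega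
    rw [nstep_mk, if_neg hb1, if_neg hb2, if_pos (show a0 + (n - 1 - a0) + 1 = n by omega),
      if_neg (show ¬(n - 1 - a0 + 1 = n) by omega)]
    exact congrArg₂ Prod.mk (by omega) (by omega)
  obtain ⟨t2, ht2⟩ := reach_E0 ⟨c1, c2, c3, c4, c5⟩ (n + (d - (n - l2)) - (n - a0)) (n - a0)
    (by omega) (by omega) (by omega)
  exact ⟨t2 + ((n - 1 - a0) + 1), iter_comp _ hstep ht2⟩

lemma reach_fromD (hc : Ctx n l1 l2 d) (b : ℕ) (hb : b < n) :
    ∃ t, (nstep n l1 l2 d)^[t] (d, b) = (0, d - (n - l2)) := by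
  have hc' := hc
  obtain ⟨c1, c2, c3, c4, c5⟩ := hc'
  rcases Nat.lt_or_ge b 1 with h | h
  · -- b = 0
    obtain ⟨t1, ht1⟩ := reach_P0 hc l1 d (le_refl d) rfl
    obtain ⟨t2, ht2⟩ := reach_R1gen hc (d + l1) (le_refl _) (by omega)
    have hb0 : b = 0 := by omega
    rw [hb0]
    exact ⟨t2 + t1, iter_comp _ ht1 ht2⟩
  rcases Nat.lt_or_ge b l2 with h2 | h2
  · -- 1 ≤ b < l2
    obtain ⟨t1, ht1⟩ := reach_Ed hc (l2 - b) b h (by omega)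
    have ht2 := reach_wrap0 hc l2 (le_refl _) (by omega)
    obtain ⟨t3, ht3⟩ := reach_R1gen hc (d + (n - l2)) (by omega) (le_refl _)
    exact ⟨t3 + ((n - l2) + t1), iter_comp _ (iter_comp _ ht1 ht2) ht3⟩
  · -- l2 ≤ b
    have ht1 := reach_wrap0 hc b h2 hb
    rcases Nat.lt_or_ge (n - b) l1 with h3 | h3
    · obtain ⟨t2, ht2⟩ := reach_P0 hc (d + l1 - (d + (n - b))) (d + (n - b)) (by omega) (by omega)
      obtain ⟨t3, ht3⟩ := reach_R1gen hc (d + l1) (le_refl _) (by omega)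
      exact ⟨t3 + (t2 + (n - b)), iter_comp _ (iter_comp _ ht1 ht2) ht3⟩
    · obtain ⟨t2, ht2⟩ := reach_R1gen hc (d + (n - b)) (by omega) (by omega)
      exact ⟨t2 + (n - b), iter_comp _ ht1 ht2⟩

lemma reach_from0 (hc : Ctx n l1 l2 d) (b : ℕ) (hb : b < n) :
    ∃ t, (nstep n l1 l2 d)^[t] (0, b) = (0, d - (n - l2)) := by
  have hc' := hc
  obtain ⟨c1, c2, c3, c4, c5⟩ := hc'
  by_cases hH : b = d - (n - l2) ∨ ¬(d - (n - l2) ≤ b ∧ b < d)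
  · rcases le_or_gt b (d - (n - l2)) with h | h
    · exact reach_E0 hc (d - (n - l2) - b) b hb hH (by omega)
    · exact reach_E0 hc (n + (d - (n - l2)) - b) b hb hH (by omega)
  · -- d - (n - l2) < b < d, unblocked at 0
    have h1 : ¬ nb1 n l2 d (0, b) := by rw [nb1_mk]; omega
    have h2 : ¬ nb2 n l1 d (0, b) := by rw [nb2_mk]; omega
    have hst : nstep n l1 l2 d (0, b) = (1, b + 1) := by
      rw [nstep_mk, if_neg h1, if_neg h2, if_neg (show ¬(0 + 1 = n) by omega),
        if_neg (show ¬(b + 1 = n) by omega)]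
    obtain ⟨t2, b', hb', ht2⟩ := reach_TLOW hc (d - 1) 1 (b + 1) (by omega) (le_refl _) (by omega)
    obtain ⟨t3, ht3⟩ := reach_fromD hc b' hb'
    refine ⟨t3 + (t2 + 1), iter_comp _ (iter_comp _ ?_ ht2) ht3⟩
    rw [Function.iterate_one, hst]

lemma reach_master (hc : Ctx n l1 l2 d) (a b : ℕ) (ha : a < n) (hb : b < n) :
    ∃ t, (nstep n l1 l2 d)^[t] (a, b) = (0, d - (n - l2)) := by
  have hc' := hc
  obtain ⟨c1, c2, c3, c4, c5⟩ := hc'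
  rcases Nat.lt_or_ge a 1 with h | h
  · rw [show a = 0 by omega]
    exact reach_from0 hc b hb
  rcases le_or_gt a d with h2 | h2
  · obtain ⟨t1, b', hb', ht1⟩ := reach_TLOW hc (d - a) a b hb h (by omega)
    obtain ⟨t2, ht2⟩ := reach_fromD hc b' hb'
    exact ⟨t2 + t1, iter_comp _ ht1 ht2⟩
  · obtain ⟨t1, b', hb', ht1⟩ := reach_THIGH hc (n - a) a b ha hb h2 (by omega)
    obtain ⟨t2, ht2⟩ := reach_from0 hc b' hb'
    exact ⟨t2 + t1, iter_comp _ ht1 ht2⟩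

end Reach



/-- Explicit trajectory of the limit cycle starting at (0,0). -/
def F (n l2 d : ℕ) (t : ℕ) : ℕ × ℕ :=
  if t < d - (n - l2) then (0, t)
  else if t < 2 * d - (n - l2) then (t - (d - (n - l2)), t)
  else if t < l2 then (d, t)
  else if t < n then (d + (t - l2), t)
  else if t < 2 * n - d - (n - l2) then (d + (n - l2) + (t - n), t - n)
  else if t < 2 * n then (0, t - n)
  else (0, 0)

section Cycle

variable {n l1 l2 d : ℕ}

set_option maxHeartbeats 2000000 in
lemma F_bnd (hc : Ctx n l1 l2 d) (t : ℕ) : (F n l2 d t).1 < n ∧ (F n l2 d t).2 < n := by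
  obtain ⟨c1, c2, c3, c4, c5⟩ := hc
  unfold F
  split_ifs <;> constructor <;> dsimp only <;> omega

set_option maxHeartbeats 2000000 in
lemma F_dg (hc : Ctx n l1 l2 d) : F n l2 d (d - (n - l2)) = (0, d - (n - l2)) := by
  obtain ⟨c1, c2, c3, c4, c5⟩ := hc
  unfold F
  split_ifs <;> exact congrArg₂ Prod.mk (by omega) (by omega)

set_option maxHeartbeats 2000000 in
lemma F_2n (hc : Ctx n l1 l2 d) : F n l2 d (2 * n) = (0, 0) := by
  obtain ⟨c1, c2, c3, c4, c5⟩ := hc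
  unfold F
  split_ifs <;> exact congrArg₂ Prod.mk (by omega) (by omega)

set_option maxHeartbeats 2000000 in
lemma F_zero (hc : Ctx n l1 l2 d) : F n l2 d 0 = (0, 0) := by
  obtain ⟨c1, c2, c3, c4, c5⟩ := hc
  unfold F
  split_ifs <;> exact congrArg₂ Prod.mk (by omega) (by omega)

set_option maxHeartbeats 2000000 in
lemma cyc_step (hc : Ctx n l1 l2 d) (t : ℕ) (ht : t < 2 * n) :
    ¬ nb2 n l1 d (F n l2 d t) ∧ nstep n l1 l2 d (F n l2 d t) = F n l2 d (t + 1) := by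
  obtain ⟨c1, c2, c3, c4, c5⟩ := hc
  rcases lt_or_ge t (d - (n - l2)) with h1 | h1
  · -- region 1 : waiting at 0
    have hFt : F n l2 d t = (0, t) := by
      unfold F; split_ifs <;> exact congrArg₂ Prod.mk (by omega) (by omega)
    have hb1 : nb1 n l2 d (0, t) := by rw [nb1_mk]; omega
    have hb2 : ¬ nb2 n l1 d (0, t) := by rw [nb2_mk]; omega
    refine ⟨by rw [hFt]; exact hb2, ?_⟩
    rw [hFt, nstep_mk, if_pos hb1, if_neg hb2]
    unfold F; split_ifs <;> exact congrArg₂ Prod.mk (by omega) (by omega)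
  rcases lt_or_ge t (2 * d - (n - l2)) with h2 | h2
  · -- region 2 : travelling from 0 to d
    have hFt : F n l2 d t = (t - (d - (n - l2)), t) := by
      unfold F; split_ifs <;> exact congrArg₂ Prod.mk (by omega) (by omega)
    have hb1 : ¬ nb1 n l2 d (t - (d - (n - l2)), t) := by rw [nb1_mk]; omega
    have hb2 : ¬ nb2 n l1 d (t - (d - (n - l2)), t) := by rw [nb2_mk]; omega
    refine ⟨by rw [hFt]; exact hb2, ?_⟩
    rw [hFt, nstep_mk, if_neg hb1, if_neg hb2]
    unfold F; split_ifs <;> exact congrArg₂ Prod.mk (by omega) (by omega)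
  rcases lt_or_ge t l2 with h3 | h3
  · -- region 3 : waiting at d
    have hFt : F n l2 d t = (d, t) := by
      unfold F; split_ifs <;> exact congrArg₂ Prod.mk (by omega) (by omega)
    have hb1 : nb1 n l2 d (d, t) := by rw [nb1_mk]; omega
    have hb2 : ¬ nb2 n l1 d (d, t) := by rw [nb2_mk]; omega
    refine ⟨by rw [hFt]; exact hb2, ?_⟩
    rw [hFt, nstep_mk, if_pos hb1, if_neg hb2]
    unfold F; split_ifs <;> exact congrArg₂ Prod.mk (by omega) (by omega)
  rcases lt_or_ge t n with h4 | h4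
  · -- region 4 : travelling from d towards 0 (first part)
    have hFt : F n l2 d t = (d + (t - l2), t) := by
      unfold F; split_ifs <;> exact congrArg₂ Prod.mk (by omega) (by omega)
    have hb1 : ¬ nb1 n l2 d (d + (t - l2), t) := by rw [nb1_mk]; omega
    have hb2 : ¬ nb2 n l1 d (d + (t - l2), t) := by rw [nb2_mk]; omega
    refine ⟨by rw [hFt]; exact hb2, ?_⟩
    rw [hFt, nstep_mk, if_neg hb1, if_neg hb2]
    unfold F; split_ifs <;> exact congrArg₂ Prod.mk (by omega) (by omega)
  rcases lt_or_ge t (2 * n - d - (n - l2)) with h5 | h5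
  · -- region 5 : travelling (second part, b has wrapped)
    have hFt : F n l2 d t = (d + (n - l2) + (t - n), t - n) := by
      unfold F; split_ifs <;> exact congrArg₂ Prod.mk (by omega) (by omega)
    have hb1 : ¬ nb1 n l2 d (d + (n - l2) + (t - n), t - n) := by rw [nb1_mk]; omega
    have hb2 : ¬ nb2 n l1 d (d + (n - l2) + (t - n), t - n) := by rw [nb2_mk]; omega
    refine ⟨by rw [hFt]; exact hb2, ?_⟩
    rw [hFt, nstep_mk, if_neg hb1, if_neg hb2]
    unfold F; split_ifs <;> exact congrArg₂ Prod.mk (by omega) (by omega)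
  · -- region 6 : waiting at 0 again
    have hFt : F n l2 d t = (0, t - n) := by
      unfold F; split_ifs <;> exact congrArg₂ Prod.mk (by omega) (by omega)
    have hb1 : nb1 n l2 d (0, t - n) := by rw [nb1_mk]; omega
    have hb2 : ¬ nb2 n l1 d (0, t - n) := by rw [nb2_mk]; omega
    refine ⟨by rw [hFt]; exact hb2, ?_⟩
    rw [hFt, nstep_mk, if_pos hb1, if_neg hb2]
    unfold F; split_ifs <;> exact congrArg₂ Prod.mk (by omega) (by omega)

set_option maxHeartbeats 2000000 in
lemma cyc_iter (hc : Ctx n l1 l2 d) : ∀ t, t ≤ 2 * n →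
    (nstep n l1 l2 d)^[t] (0, 0) = F n l2 d t := by
  intro t
  induction t with
  | zero => intro _; rw [Function.iterate_zero_apply, F_zero hc]
  | succ t ih =>
    intro ht
    rw [Function.iterate_succ_apply', ih (by omega), (cyc_step hc t (by omega)).2]

end Cycle



section Moves

lemma moves1_succ (n l1 l2 d : ℕ) (s : State n) (T : ℕ) :
    moves1 n l1 l2 d s (T + 1) =
      moves1 n l1 l2 d s T +
        (if blocked1 n l1 l2 d ((step n l1 l2 d)^[T] s) then 0 else 1) := by
  unfold moves1
  rw [Finset.range_add_one, Finset.filter_insert]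
  by_cases h : blocked1 n l1 l2 d ((step n l1 l2 d)^[T] s)
  · rw [if_neg (not_not_intro h), if_pos h]
    simp
  · rw [if_pos h, if_neg h, Finset.card_insert_of_notMem (by simp)]

lemma disp1 (n l1 l2 d : ℕ) (s : State n) :
    ∀ T, ((step n l1 l2 d)^[T] s).1 = s.1 + ((moves1 n l1 l2 d s T : ℕ) : ZMod n) := by
  intro T
  induction T with
  | zero => simp [moves1]
  | succ T ih =>
    rw [Function.iterate_succ_apply', moves1_succ]
    by_cases h : blocked1 n l1 l2 d ((step n l1 l2 d)^[T] s)
    · have hs : (step n l1 l2 d ((step n l1 l2 d)^[T] s)).1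
          = ((step n l1 l2 d)^[T] s).1 := by simp [step, h]
      rw [hs, ih, if_pos h]
      simp
    · have hs : (step n l1 l2 d ((step n l1 l2 d)^[T] s)).1
          = ((step n l1 l2 d)^[T] s).1 + 1 := by simp [step, h]
      rw [hs, ih, if_neg h]
      push_cast
      ring

end Moves

section Main

variable {n l1 l2 d : ℕ}

lemma iter_sim' (hc : Ctx n l1 l2 d) (t a b : ℕ) (ha : a < n) (hb : b < n) :
    (step n l1 l2 d)^[t] ((a : ZMod n), (b : ZMod n)) =
      ((((nstep n l1 l2 d)^[t] (a, b)).1 : ZMod n),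
       (((nstep n l1 l2 d)^[t] (a, b)).2 : ZMod n)) :=
  (iter_sim n l1 l2 d hc t (a, b) ha hb).1

end Main

set_option maxHeartbeats 2000000 in

set_option maxHeartbeats 2000000 in
theorem stmt12 (n l1 l2 d : ℕ) (hn : 0 < n) (hd : 0 < d) (h2d : 2 * d ≤ n)
    (hl1pos : 0 < l1) (hl1n : l1 < n) (hl2pos : 0 < l2) (hl2n : l2 < n) (h12 : l1 ≤ l2)
    (h1 : l1 ≤ d) (h2 : l1 ≤ n - 2 * d) (h3 : l2 > n - d) (h4 : 2 * d ≤ l2)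
    (h5 : l1 + l2 ≤ n) :
    ∃ (s0 : State n) (T : ℕ), Admissible n l1 l2 d s0 ∧
      Periodic n l1 l2 d s0 T ∧
      2 * moves1 n l1 l2 d s0 T = T ∧
      moves2 n l1 l2 d s0 T = T ∧
      (∀ s : State n, Admissible n l1 l2 d s →
        ∃ t0 t : ℕ, (step n l1 l2 d)^[t0] s = (step n l1 l2 d)^[t] s0) := by
  have hc : Ctx n l1 l2 d := ⟨h4, by omega, h5, hl1pos, hl2n⟩
  have hctx := hc
  obtain ⟨c1, c2, c3, c4, c5⟩ := hctx
  haveI : NeZero n := ⟨by omega⟩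
  refine ⟨(((0 : ℕ) : ZMod n), ((0 : ℕ) : ZMod n)), 2 * n, ?_, ?_, ?_, ?_, ?_⟩
  · -- Admissible
    have h1' : (1 : ZMod n) = ((1 : ℕ) : ZMod n) := by norm_cast
    have hd' : ((d : ZMod n)) = ((d : ℕ) : ZMod n) := rfl
    constructor
    · rintro ⟨-, h2', -, -⟩
      rw [h1'] at h2'
      have := (occ_iff' n 0 1 l1 (by omega) (by omega) (by omega) (by omega)).mp h2'
      omega
    · rintro ⟨hd1, -, -, -⟩
      have := (occ_iff' n 0 d l1 (by omega) (by omega) (by omega) (by omega)).mp hd1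
      omega
  · -- Periodic
    refine ⟨by omega, ?_⟩
    rw [iter_sim' hc (2 * n) 0 0 (by omega) (by omega), cyc_iter hc (2 * n) le_rfl, F_2n hc]
  · -- moves1
    have hper : (step n l1 l2 d)^[2 * n] (((0 : ℕ) : ZMod n), ((0 : ℕ) : ZMod n))
        = (((0 : ℕ) : ZMod n), ((0 : ℕ) : ZMod n)) := by
      rw [iter_sim' hc (2 * n) 0 0 (by omega) (by omega), cyc_iter hc (2 * n) le_rfl, F_2n hc]
    have hdisp := disp1 n l1 l2 d (((0 : ℕ) : ZMod n), ((0 : ℕ) : ZMod n)) (2 * n)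
    rw [hper] at hdisp
    have hz : ((moves1 n l1 l2 d (((0 : ℕ) : ZMod n), ((0 : ℕ) : ZMod n)) (2 * n) : ℕ)
        : ZMod n) = 0 := by
      have := hdisp
      exact (left_eq_add.mp this)
    have hdvd : n ∣ moves1 n l1 l2 d (((0 : ℕ) : ZMod n), ((0 : ℕ) : ZMod n)) (2 * n) :=
      (ZMod.natCast_eq_zero_iff _ n).mp hz
    have hle : moves1 n l1 l2 d (((0 : ℕ) : ZMod n), ((0 : ℕ) : ZMod n)) (2 * n) ≤ 2 * n := by
      have := Finset.card_filter_le (Finset.range (2 * n))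
        (fun t => ¬ blocked1 n l1 l2 d
          ((step n l1 l2 d)^[t] (((0 : ℕ) : ZMod n), ((0 : ℕ) : ZMod n))))
      simpa [moves1] using this
    have hblk0 : blocked1 n l1 l2 d
        ((step n l1 l2 d)^[0] (((0 : ℕ) : ZMod n), ((0 : ℕ) : ZMod n))) := by
      rw [Function.iterate_zero_apply]
      exact (blocked1_iff n l1 l2 d hc 0 0 (by omega) (by omega)).mpr (by rw [nb1_mk]; omega)
    have hlt : moves1 n l1 l2 d (((0 : ℕ) : ZMod n), ((0 : ℕ) : ZMod n)) (2 * n) < 2 * n := by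
      have h0 : (0 : ℕ) ∉ (Finset.range (2 * n)).filter
          (fun t => ¬ blocked1 n l1 l2 d
            ((step n l1 l2 d)^[t] (((0 : ℕ) : ZMod n), ((0 : ℕ) : ZMod n)))) :=
        fun hmem => (Finset.mem_filter.mp hmem).2 hblk0
      have hss := (Finset.ssubset_iff_of_subset (Finset.filter_subset _ _)).mpr
        ⟨0, Finset.mem_range.mpr (by omega), h0⟩
      have := Finset.card_lt_card hss
      simpa [moves1] using this
    have hunblk : ¬ blocked1 n l1 l2 d
        ((step n l1 l2 d)^[d - (n - l2)] (((0 : ℕ) : ZMod n), ((0 : ℕ) : ZMod n))) := by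
      rw [iter_sim' hc (d - (n - l2)) 0 0 (by omega) (by omega),
        cyc_iter hc (d - (n - l2)) (by omega), F_dg hc]
      intro hb
      exact (by rw [nb1_mk]; omega : ¬ nb1 n l2 d (0, d - (n - l2)))
        ((blocked1_iff n l1 l2 d hc 0 (d - (n - l2)) (by omega) (by omega)).mp hb)
    have hpos : 0 < moves1 n l1 l2 d (((0 : ℕ) : ZMod n), ((0 : ℕ) : ZMod n)) (2 * n) := by
      have : d - (n - l2) ∈ (Finset.range (2 * n)).filter
          (fun t => ¬ blocked1 n l1 l2 d
            ((step n l1 l2 d)^[t] (((0 : ℕ) : ZMod n), ((0 : ℕ) : ZMod n)))) :=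
        Finset.mem_filter.mpr ⟨Finset.mem_range.mpr (by omega), hunblk⟩
      have := Finset.card_pos.mpr ⟨_, this⟩
      simpa [moves1] using this
    obtain ⟨c, hcc⟩ := hdvd
    rcases c with _ | _ | c
    · omega
    · omega
    · have : n * (c + 1 + 1) = n * c + 2 * n := by ring
      omega
  · -- moves2
    have hfil : (Finset.range (2 * n)).filter
        (fun t => ¬ blocked2 n l1 l2 d
          ((step n l1 l2 d)^[t] (((0 : ℕ) : ZMod n), ((0 : ℕ) : ZMod n))))
        = Finset.range (2 * n) := by
      refine Finset.filter_true_of_mem (fun t htm => ?_)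
      have ht : t < 2 * n := Finset.mem_range.mp htm
      rw [iter_sim' hc t 0 0 (by omega) (by omega), cyc_iter hc t (by omega)]
      intro hb
      exact (cyc_step hc t ht).1
        ((blocked2_iff n l1 l2 d hc (F n l2 d t).1 (F n l2 d t).2
          (F_bnd hc t).1 (F_bnd hc t).2).mp (by
            rw [← Prod.mk.eta (p := F n l2 d t)] at hb
            exact hb))
    unfold moves2
    rw [hfil, Finset.card_range]
  · -- convergence
    intro s _hs
    obtain ⟨t0, ht0⟩ := reach_master hc s.1.val s.2.val (ZMod.val_lt s.1) (ZMod.val_lt s.2)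
    refine ⟨t0, d - (n - l2), ?_⟩
    have hs : s = (((s.1.val : ℕ) : ZMod n), ((s.2.val : ℕ) : ZMod n)) :=
      Prod.ext (ZMod.natCast_rightInverse s.1).symm (ZMod.natCast_rightInverse s.2).symm
    rw [hs, iter_sim' hc t0 s.1.val s.2.val (ZMod.val_lt s.1) (ZMod.val_lt s.2), ht0,
      iter_sim' hc (d - (n - l2)) 0 0 (by omega) (by omega),
      cyc_iter hc (d - (n - l2)) (by omega), F_dg hc]



end TwoContour
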